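/- Over {a<b<c}, for any words u ∈ {b,c}* and exponents α, β ≥ 0 with α ≥ β, the words a b^α c u c b^β a and a b^{α-β} c b^β u b^β c a are M-equivalent. -/

import Mathlib

open List

/-- Number of occurrences of `v` as a scattered subsequence of `w`. -/
def scount {α : Type*} [DecidableEq α] (w v : List α) : ℕ := w.sublists.count v

/-- The ternary ordered alphabet {a < b < c}. -/
inductive ABC | a | b | c
deriving DecidableEq

open ABC

/-- M-equivalence over the ordered alphabet {a < b < c}. -/
def MEq3 (w w' : List ABC) : Prop :=
  scount w [a] = scount w' [a] ∧ scount w [b] = scount w' [b] ∧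
  scount w [c] = scount w' [c] ∧ scount w [a, b] = scount w' [a, b] ∧
  scount w [b, c] = scount w' [b, c] ∧ scount w [a, b, c] = scount w' [a, b, c]

/-- Projection onto {a, c}: erase all b's. -/
def projAC (w : List ABC) : List ABC := w.filter (· ≠ b)

abbrev A (k : ℕ) : List ABC := List.replicate k a
abbrev B (k : ℕ) : List ABC := List.replicate k b
abbrev C (k : ℕ) : List ABC := List.replicate k c

/-!
Occurrence counts of patterns of length at most three obey a Cauchy-product formula under
concatenation. Both words have the form `a m a` with `m` free of `a`, and the six counts of
`a m a` depend only on `|m|_b`, `|m|_c` and `|m|_bc`. For the two middles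
`b^α c u c b^β` and `b^(α-β) c b^β u b^β c` these agree; in particular both have
`|m|_bc = α (|u|_c + 2) + |u|_b + |u|_bc`.
-/

section Scount

variable {σ : Type*} [DecidableEq σ]

theorem scount_eq_count_sublists' (w v : List σ) : scount w v = count v w.sublists' :=
  (sublists_perm_sublists' w).count_eq v

theorem count_map_cons_cons (x y : σ) (v : List σ) (L : List (List σ)) :
    count (y :: v) (L.map (cons x)) = if x = y then count v L else 0 := by
  split_ifs with hxy
  · subst hxy
    exact count_map_of_injective _ _ cons_injective v
  · exact count_eq_zero.2 (by simp [hxy])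

theorem scount_cons_cons (x y : σ) (w v : List σ) :
    scount (x :: w) (y :: v) = scount w (y :: v) + if x = y then scount w v else 0 := by
  simp only [scount_eq_count_sublists', sublists'_cons, count_append, count_map_cons_cons]

@[simp]
theorem scount_nil_cons (y : σ) (v : List σ) : scount [] (y :: v) = 0 := by
  simp [scount]

@[simp]
theorem scount_nil_right (w : List σ) : scount w [] = 1 := by
  induction w with
  | nil => simp [scount]
  | cons x w ih =>
    rw [scount_eq_count_sublists'] at ih ⊢
    simp [ih, count_eq_zero]

theorem scount_eq_zero_of_mem_of_not_mem {w v : List σ} {z : σ} (hzv : z ∈ v) (hzw : z ∉ w) :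
    scount w v = 0 :=
  count_eq_zero.2 fun h => hzw ((mem_sublists.1 h).subset hzv)

theorem scount_replicate_singleton (k : ℕ) (x : σ) : scount (replicate k x) [x] = k := by
  induction k with
  | zero => simp
  | succ k ih => simp [replicate_succ, scount_cons_cons, ih]

theorem scount_append_singleton (w₁ w₂ : List σ) (x : σ) :
    scount (w₁ ++ w₂) [x] = scount w₁ [x] + scount w₂ [x] := by
  induction w₁ with
  | nil => simp
  | cons y w₁ ih =>
    simp only [cons_append, scount_cons_cons, ih, scount_nil_right]
    omega

theorem scount_append_pair (w₁ w₂ : List σ) (x y : σ) :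
    scount (w₁ ++ w₂) [x, y] =
      scount w₁ [x, y] + scount w₁ [x] * scount w₂ [y] + scount w₂ [x, y] := by
  induction w₁ with
  | nil => simp
  | cons z w₁ ih =>
    simp only [cons_append, scount_cons_cons, ih, scount_append_singleton, scount_nil_right]
    split <;> ring

theorem scount_append_triple (w₁ w₂ : List σ) (x y z : σ) :
    scount (w₁ ++ w₂) [x, y, z] =
      scount w₁ [x, y, z] + scount w₁ [x, y] * scount w₂ [z] +
        scount w₁ [x] * scount w₂ [y, z] + scount w₂ [x, y, z] := by
  induction w₁ with
  | nil => simp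
  | cons t w₁ ih =>
    simp only [cons_append, scount_cons_cons, ih, scount_append_pair, scount_nil_right]
    split <;> ring

end Scount

theorem meq3_wrap_a {m m' : List ABC} (hm : a ∉ m) (hm' : a ∉ m')
    (hb : scount m [b] = scount m' [b]) (hc : scount m [c] = scount m' [c])
    (hbc : scount m [b, c] = scount m' [b, c]) :
    MEq3 ([a] ++ m ++ [a]) ([a] ++ m' ++ [a]) := by
  have hfree {w : List ABC} (hw : a ∉ w) :
      scount w [a] = 0 ∧ scount w [a, b] = 0 ∧ scount w [a, b, c] = 0 :=
    ⟨scount_eq_zero_of_mem_of_not_mem (by simp) hw, scount_eq_zero_of_mem_of_not_mem (by simp) hw,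
      scount_eq_zero_of_mem_of_not_mem (by simp) hw⟩
  obtain ⟨ha, hab, habc⟩ := hfree hm
  obtain ⟨ha', hab', habc'⟩ := hfree hm'
  refine ⟨?_, ?_, ?_, ?_, ?_, ?_⟩ <;>
    simp [scount_append_singleton, scount_append_pair, scount_append_triple, scount_cons_cons, *]

theorem stmt_7 (u : List ABC) (hu : ∀ x ∈ u, x = b ∨ x = c)
    (α β : ℕ) (hβα : β ≤ α) :
    MEq3 ([a] ++ B α ++ [c] ++ u ++ [c] ++ B β ++ [a])
      ([a] ++ B (α - β) ++ [c] ++ B β ++ u ++ B β ++ [c] ++ [a]) := by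
  obtain ⟨γ, rfl⟩ := Nat.exists_eq_add_of_le hβα
  have hau : a ∉ u := fun h => by simpa using hu a h
  have hBc (k : ℕ) : scount (B k) [c] = 0 :=
    scount_eq_zero_of_mem_of_not_mem (z := c) (by simp) (by simp)
  have hBbc (k : ℕ) : scount (B k) [b, c] = 0 :=
    scount_eq_zero_of_mem_of_not_mem (z := c) (by simp) (by simp)
  have key := meq3_wrap_a (m := B (β + γ) ++ [c] ++ u ++ [c] ++ B β)
    (m' := B γ ++ [c] ++ B β ++ u ++ B β ++ [c]) (by simp [hau]) (by simp [hau]) ?_ ?_ ?_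
  · simpa only [append_assoc, Nat.add_sub_cancel_left] using key
  all_goals
    simp [scount_append_singleton, scount_append_pair, scount_replicate_singleton,
      scount_cons_cons, hBc, hBbc] <;> ring
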